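/- For every n ≥ 3, X̃_n(3) = (n−3)·n!·(n−2)(n−3)/48; as an integer identity, 48·X̃_n(3) = (n−2)·(n−3)²·n!. (This is the case h' = 3 of the factorization X̃_n(h') = (n−h')·n!·f_{h'}(n) with f_3(n) = (n−2)(n−3)/48.) -/

import Mathlib

/-- Refined counting numbers `Xtab n h p`: `Xtab 1 2 0 = 1`, zero off `(2,0)` at `n = 1`, and
`Xtab n h p = (2n+1-h)·(Xtab (n-1) (h-2) p + Xtab (n-1) (h-1) p) + 2(h-1-n)·Xtab (n-1) (h-1) (p-1)`
for `n ≥ 2`.  `Xtab n h p` counts generalized tree-like tableaux of size `n`, half-perimeter `h`,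
with exactly `p` off-diagonal points attached to a diagonal point. -/
def Xtab : ℕ → ℤ → ℤ → ℤ
  | 0, _, _ => 0
  | 1, h, p => if h = 2 ∧ p = 0 then 1 else 0
  | n + 2, h, p =>
      (2 * ((n : ℤ) + 2) + 1 - h) * (Xtab (n + 1) (h - 2) p + Xtab (n + 1) (h - 1) p)
        + 2 * (h - 1 - ((n : ℤ) + 2)) * Xtab (n + 1) (h - 1) (p - 1)

/-!
On the diagonal `p = 0` the last term of the recurrence vanishes, so
`X̃_{n+1}(k) = (n + 1 - k) (X̃_n(k) + X̃_n(k - 1))`: a triangular recursion in `k`. Starting from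
`X̃_n(k) = 0` for `k < 0`, induction on `n` gives in turn `X̃_n(0) = n!`, `2 X̃_n(1) = (n - 1) n!`,
`24 X̃_n(2) = (n - 2)(3n - 5) n!` and finally the formula for `X̃_n(3)`.
-/

open Nat

theorem Xtab_of_neg (n : ℕ) {h p : ℤ} (hp : p < 0) : Xtab n h p = 0 := by
  induction n generalizing h p with
  | zero => rfl
  | succ m ih =>
    match m with
    | 0 => simp [Xtab, hp.ne]
    | _ + 1 =>
      rw [Xtab, ih hp, ih hp, ih (by omega)]
      ring

theorem Xtab_of_le (n : ℕ) {h p : ℤ} (hh : h ≤ n) : Xtab n h p = 0 := by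
  induction n generalizing h p with
  | zero => rfl
  | succ m ih =>
    match m with
    | 0 =>
      have : h ≠ 2 := by omega
      simp [Xtab, this]
    | _ + 1 =>
      push_cast at hh
      rw [Xtab, ih (by push_cast; omega), ih (by push_cast; omega),
        ih (by push_cast; omega)]
      ring

def Xtilde (n : ℕ) (k : ℤ) : ℤ :=
  Xtab n ((n : ℤ) + 1 + k) 0

theorem Xtilde_of_neg (n : ℕ) {k : ℤ} (hk : k < 0) : Xtilde n k = 0 :=
  Xtab_of_le n (by omega)

theorem Xtilde_succ {n : ℕ} (hn : 1 ≤ n) (k : ℤ) :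
    Xtilde (n + 1) k = ((n : ℤ) + 1 - k) * (Xtilde n k + Xtilde n (k - 1)) := by
  obtain ⟨m, rfl⟩ : ∃ m, n = m + 1 := ⟨n - 1, by omega⟩
  simp only [Xtilde, Xtab, Xtab_of_neg (m + 1) (show (0 : ℤ) - 1 < 0 by norm_num)]
  push_cast
  ring_nf

theorem Xtilde_zero {n : ℕ} (hn : 1 ≤ n) : Xtilde n 0 = n ! := by
  induction n, hn using Nat.le_induction with
  | base => simp [Xtilde, Xtab]
  | succ n hn ih =>
    rw [Xtilde_succ hn, ih, Xtilde_of_neg n (by norm_num), factorial_succ]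
    push_cast
    ring

theorem two_mul_Xtilde_one {n : ℕ} (hn : 1 ≤ n) : 2 * Xtilde n 1 = ((n : ℤ) - 1) * n ! := by
  induction n, hn using Nat.le_induction with
  | base => simp [Xtilde, Xtab]
  | succ n hn ih =>
    rw [Xtilde_succ hn, sub_self, Xtilde_zero hn, factorial_succ]
    push_cast
    linear_combination (n : ℤ) * ih

theorem twentyFour_mul_Xtilde_two {n : ℕ} (hn : 2 ≤ n) :
    24 * Xtilde n 2 = ((n : ℤ) - 2) * (3 * n - 5) * n ! := by
  induction n, hn using Nat.le_induction with
  | base => simp [Xtilde_succ le_rfl]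
  | succ n hn ih =>
    have h1 := two_mul_Xtilde_one (n := n) (by omega)
    rw [Xtilde_succ (by omega), factorial_succ]
    push_cast
    linear_combination ((n : ℤ) - 1) * ih + 12 * ((n : ℤ) - 1) * h1

theorem fortyEight_mul_Xtilde_three {n : ℕ} (hn : 3 ≤ n) :
    48 * Xtilde n 3 = ((n : ℤ) - 2) * ((n : ℤ) - 3) ^ 2 * n ! := by
  induction n, hn using Nat.le_induction with
  | base => simp [Xtilde_succ (show 1 ≤ 2 by norm_num)]
  | succ n hn ih =>
    have h2 := twentyFour_mul_Xtilde_two (n := n) (by omega)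
    rw [Xtilde_succ (by omega), factorial_succ]
    push_cast
    linear_combination ((n : ℤ) - 2) * ih + 2 * ((n : ℤ) - 2) * h2

/-- For every n ≥ 3, 48·X̃_n(3) = (n−2)·(n−3)²·n!, where X̃_n(3) := X_n(n+4, 0). -/
theorem stmt13 (n : ℕ) (hn : 3 ≤ n) :
    48 * Xtab n ((n : ℤ) + 4) 0
      = ((n : ℤ) - 2) * ((n : ℤ) - 3) ^ 2 * (Nat.factorial n : ℤ) := by
  have h := fortyEight_mul_Xtilde_three hn
  rwa [Xtilde, add_assoc, show (1 : ℤ) + 3 = 4 by norm_num] at h
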